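/- Let m+n points be in convex position with all m red points consecutive, m,n ≥ 1, m+n ≥ 3. If one of the two bichromatic convex hull edges is removed from the straight-line drawing of the complete bipartite graph, then every plane subdrawing has at most m+n−2 edges; in particular it contains no spanning tree. -/

import Mathlib

open Real

open scoped Classical

/-!
Points on a circle with increasing angles are in strictly convex counterclockwise position, so
two chords cross as soon as their endpoints interleave. A plane set of bichromatic chords `(r, b)`
is therefore nested (`r < r'` forces `b' ≤ b`), and `r + (N - 1 - b)` takes distinct values in
`[0, N - 2]` on it, so it has at most `N - 1 = m + n - 1` chords. A bichromatic edge of the convex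
hull joins two cyclically consecutive points (otherwise a chord crossing it would put points of it
inside the hull), hence it crosses no chord; adding it to a plane subdrawing that avoids it yields
the bound `m + n - 2`, one less than the number of edges of a spanning tree.
-/

/-- Twice the signed area of the triangle `x y z`: positive iff `x, y, z` turn counterclockwise. -/
def orient (x y z : ℝ × ℝ) : ℝ :=
  (y.1 - x.1) * (z.2 - x.2) - (y.2 - x.2) * (z.1 - x.1)

lemma orient_swap (x y z : ℝ × ℝ) : orient x z y = -orient x y z := by
  simp only [orient]; ring

lemma orient_rotate (x y z : ℝ × ℝ) : orient y z x = orient x y z := by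
  simp only [orient]; ring

lemma sin_add_sin_sub_sin_add_pos {x y : ℝ} (hx : 0 < x) (hy : 0 < y) (hxy : x + y < 2 * π) :
    0 < sin x + sin y - sin (x + y) := by
  obtain ⟨a, rfl⟩ : ∃ a, x = 2 * a := ⟨x / 2, by ring⟩
  obtain ⟨b, rfl⟩ : ∃ b, y = 2 * b := ⟨y / 2, by ring⟩
  have key : sin (2 * a) + sin (2 * b) - sin (2 * a + 2 * b) = 4 * sin a * sin b * sin (a + b) := by
    rw [← mul_add, sin_two_mul, sin_two_mul, sin_two_mul, sin_add, cos_add]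
    linear_combination -(2 * sin a * cos a) * sin_sq_add_cos_sq b -
      (2 * sin b * cos b) * sin_sq_add_cos_sq a
  have ha : 0 < sin a := sin_pos_of_pos_of_lt_pi (by linarith) (by linarith)
  have hb : 0 < sin b := sin_pos_of_pos_of_lt_pi (by linarith) (by linarith)
  have hab : 0 < sin (a + b) := sin_pos_of_pos_of_lt_pi (by linarith) (by linarith)
  rw [key]
  positivity

lemma orient_circle (c : ℝ × ℝ) (ρ α β γ : ℝ) :
    orient (c.1 + ρ * cos α, c.2 + ρ * sin α) (c.1 + ρ * cos β, c.2 + ρ * sin β)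
      (c.1 + ρ * cos γ, c.2 + ρ * sin γ)
      = ρ ^ 2 * (sin (β - α) + sin (γ - β) - sin (γ - α)) := by
  simp only [orient, sin_sub]
  ring

lemma exists_mem_openSegment_inter {a b c d : ℝ × ℝ}
    (hb : orient a c b < 0) (hd : 0 < orient a c d) (ha : 0 < orient b d a)
    (hc : orient b d c < 0) :
    (openSegment ℝ a c ∩ openSegment ℝ b d).Nonempty := by
  -- `orient b d` is affine and vanishes at `(1 - s) • a + s • c`; likewise `orient a c` and `t`
  set s := orient b d a / (orient b d a - orient b d c)
  set t := orient a c b / (orient a c b - orient a c d)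
  have hs : s ∈ Set.Ioo (0 : ℝ) 1 :=
    ⟨div_pos ha (by linarith), (div_lt_one (by linarith)).2 (by linarith)⟩
  have ht : t ∈ Set.Ioo (0 : ℝ) 1 :=
    ⟨div_pos_of_neg_of_neg hb (by linarith), (div_lt_one_of_neg (by linarith)).2 (by linarith)⟩
  refine ⟨(1 - s) • a + s • c, ⟨1 - s, s, by linarith [hs.2], hs.1, by ring, rfl⟩,
    1 - t, t, by linarith [ht.2], ht.1, by ring, ?_⟩
  have h1 : orient a c b - orient a c d ≠ 0 := by linarith
  have h2 : orient b d a - orient b d c ≠ 0 := by linarith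
  simp only [s, t, orient] at h1 h2 ⊢
  ext <;> simp only [Prod.fst_add, Prod.snd_add, Prod.smul_fst, Prod.smul_snd, smul_eq_mul] <;>
    field_simp <;> ring

lemma span_pair_sub_eq_top_of_orient_ne_zero {a b k : ℝ × ℝ} (h : orient a b k ≠ 0) :
    Submodule.span ℝ {b - a, k - a} = ⊤ := by
  refine Submodule.eq_top_iff'.2 fun w ↦ Submodule.mem_span_pair.2 ?_
  refine ⟨(w.1 * (k.2 - a.2) - w.2 * (k.1 - a.1)) / orient a b k,
    ((b.1 - a.1) * w.2 - (b.2 - a.2) * w.1) / orient a b k, ?_⟩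
  ext <;> simp only [Prod.fst_add, Prod.snd_add, Prod.smul_fst, Prod.smul_snd, Prod.fst_sub,
    Prod.snd_sub, smul_eq_mul] <;> field_simp <;> simp only [orient] <;> ring

lemma apply_eq_of_mem_openSegment {E F : Type*} [AddCommGroup E] [Module ℝ E]
    [FunLike F E ℝ] [LinearMapClass F ℝ E ℝ] (f : F) {x y z : E}
    (hy : f y ≤ f x) (hz : f z ≤ f x) (hx : x ∈ openSegment ℝ y z) : f y = f x := by
  obtain ⟨s, t, hs, ht, hst, rfl⟩ := hx
  simp only [map_add, map_smul, smul_eq_mul] at hy hz ⊢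
  have hyz : f y ≤ f z := le_of_mul_le_mul_left (by linear_combination hy + f y * hst) ht
  have hzy : f z ≤ f y := le_of_mul_le_mul_left (by linear_combination hz + f z * hst) hs
  linear_combination -(f y * hst) + t * le_antisymm hyz hzy

/-- A supporting functional at `x` would be constant on `a`, `b` and `k`, hence zero. -/
lemma notMem_frontier_convexHull {S : Set (ℝ × ℝ)} {a b k k' x : ℝ × ℝ}
    (ha : a ∈ S) (hb : b ∈ S) (hk : k ∈ S) (hk' : k' ∈ S) (habk : orient a b k ≠ 0)
    (hx : x ∈ openSegment ℝ a b) (hx' : x ∈ openSegment ℝ k k') :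
    x ∉ frontier (convexHull ℝ S) := by
  intro hfr
  have hspan := span_pair_sub_eq_top_of_orient_ne_zero habk
  have hint : (interior (convexHull ℝ S)).Nonempty := by
    rw [interior_convexHull_nonempty_iff_affineSpan_eq_top,
      AffineSubspace.affineSpan_eq_top_iff_vectorSpan_eq_top_of_nonempty ℝ _ _ ⟨a, ha⟩,
      eq_top_iff, ← hspan, Submodule.span_le]
    exact Set.pair_subset (vsub_mem_vectorSpan ℝ hb ha) (vsub_mem_vectorSpan ℝ hk ha)
  obtain ⟨f, hf0, hmax⟩ :=
    geometric_hahn_banach_of_nonempty_interior_point (convex_convexHull ℝ S) hfr.2 hint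
  have hmax' : ∀ y ∈ S, f y ≤ f x := fun y hy ↦ hmax y (subset_convexHull ℝ S hy)
  have hfa := apply_eq_of_mem_openSegment f (hmax' a ha) (hmax' b hb) hx
  have hfb := apply_eq_of_mem_openSegment f (hmax' b hb) (hmax' a ha)
    (openSegment_symm ℝ a b ▸ hx)
  have hfk := apply_eq_of_mem_openSegment f (hmax' k hk) (hmax' k' hk') hx'
  refine hf0 (ContinuousLinearMap.ext fun w ↦ ?_)
  obtain ⟨s, t, rfl⟩ := Submodule.mem_span_pair.1 (hspan ▸ Submodule.mem_top : w ∈ _)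
  simp [hfa, hfb, hfk]

def IsCCWConvex {ι : Type*} [LinearOrder ι] (p : ι → ℝ × ℝ) : Prop :=
  ∀ ⦃i j k⦄, i < j → j < k → 0 < orient (p i) (p j) (p k)

lemma isCCWConvex_circle {ι : Type*} [LinearOrder ι] (c : ℝ × ℝ) {ρ : ℝ} (hρ : 0 < ρ)
    {θ : ι → ℝ} (hθ : StrictMono θ) (hθrange : ∀ i, θ i ∈ Set.Ico 0 (2 * π)) :
    IsCCWConvex fun i ↦ (c.1 + ρ * cos (θ i), c.2 + ρ * sin (θ i)) := by
  intro i j k hij hjk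
  rw [orient_circle]
  have hpos := sin_add_sin_sub_sin_add_pos (sub_pos.2 (hθ hij)) (sub_pos.2 (hθ hjk))
    (by linarith [(hθrange k).2, (hθrange i).1])
  rw [sub_add_sub_cancel'] at hpos
  exact mul_pos (pow_pos hρ 2) hpos

/-- For chords `(i, j)` with `i < j`, this says that no two of them interleave. -/
def IsNested {ι : Type*} [LinearOrder ι] (E : Finset (ι × ι)) : Prop :=
  ∀ e ∈ E, ∀ f ∈ E, e.1 < f.1 → f.2 ≤ e.2

namespace IsCCWConvex

variable {ι : Type*} [LinearOrder ι] {p : ι → ℝ × ℝ}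

lemma openSegment_inter_nonempty (hp : IsCCWConvex p) {i j k l : ι}
    (hij : i < j) (hjk : j < k) (hkl : k < l) :
    (openSegment ℝ (p i) (p k) ∩ openSegment ℝ (p j) (p l)).Nonempty := by
  apply exists_mem_openSegment_inter
  · rw [orient_swap]; exact neg_neg_of_pos (hp hij hjk)
  · exact hp (hij.trans hjk) hkl
  · rw [orient_rotate]; exact hp hij (hjk.trans hkl)
  · rw [orient_swap]; exact neg_neg_of_pos (hp hjk hkl)

lemma consecutive_of_segment_subset_frontier (hp : IsCCWConvex p) {a b : ι}
    (h : segment ℝ (p a) (p b) ⊆ frontier (convexHull ℝ (Set.range p))) :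
    (∀ k, k ≤ a ∨ b ≤ k) ∨ ∀ k, a ≤ k ∧ k ≤ b := by
  by_contra! ⟨⟨k, hak, hkb⟩, ⟨k', hk'⟩⟩
  have habk : orient (p a) (p b) (p k) ≠ 0 := by
    rw [orient_swap]; exact (neg_neg_of_pos (hp hak hkb)).ne
  have hfr : ∀ x ∈ openSegment ℝ (p a) (p b), x ∈ frontier (convexHull ℝ (Set.range p)) :=
    fun x hx ↦ h (openSegment_subset_segment ℝ _ _ hx)
  rcases lt_or_ge k' a with hk'a | hak'
  · obtain ⟨x, hx', hx⟩ := hp.openSegment_inter_nonempty hk'a hak hkb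
    exact notMem_frontier_convexHull (Set.mem_range_self a) (Set.mem_range_self b)
      (Set.mem_range_self k) (Set.mem_range_self k') habk hx
      (openSegment_symm ℝ (p k') (p k) ▸ hx') (hfr x hx)
  · obtain ⟨x, hx, hx'⟩ := hp.openSegment_inter_nonempty hak hkb (hk' hak')
    exact notMem_frontier_convexHull (Set.mem_range_self a) (Set.mem_range_self b)
      (Set.mem_range_self k) (Set.mem_range_self k') habk hx hx' (hfr x hx)

lemma isNested (hp : IsCCWConvex p) {E : Finset (ι × ι)}
    (hsep : ∀ e ∈ E, ∀ f ∈ E, f.1 < e.2)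
    (hcross : ∀ e ∈ E, ∀ f ∈ E, e ≠ f →
      openSegment ℝ (p e.1) (p e.2) ∩ openSegment ℝ (p f.1) (p f.2) = ∅) :
    IsNested E := by
  intro e he f hf hef
  by_contra! hfe
  have hne : e ≠ f := by rintro rfl; exact hef.false
  exact (hp.openSegment_inter_nonempty hef (hsep e he f hf) hfe).ne_empty (hcross e he f hf hne)

end IsCCWConvex

lemma IsNested.insert {ι : Type*} [LinearOrder ι] {E : Finset (ι × ι)} {e₀ : ι × ι}
    (hE : IsNested E)
    (h₀ : (∀ k, k ≤ e₀.1 ∨ e₀.2 ≤ k) ∨ ∀ k, e₀.1 ≤ k ∧ k ≤ e₀.2)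
    (hsep : ∀ e ∈ E, e₀.1 < e.2 ∧ e.1 < e₀.2) :
    IsNested (insert e₀ E) := by
  intro e he f hf hef
  rw [Finset.mem_insert] at he hf
  rcases he with rfl | he <;> rcases hf with rfl | hf
  · exact (lt_irrefl _ hef).elim
  · have := hsep f hf
    rcases h₀ with h₀ | h₀
    · rcases h₀ f.1 with h | h <;> order
    · exact (h₀ f.2).2
  · have := hsep e he
    rcases h₀ with h₀ | h₀
    · rcases h₀ e.2 with h | h <;> order
    · exact absurd (h₀ e.1).1 (not_le.2 hef)
  · exact hE e he f hf hef

lemma IsNested.card_le {N : ℕ} {E : Finset (Fin N × Fin N)} (hE : IsNested E)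
    (hlt : ∀ e ∈ E, e.1 < e.2) : E.card ≤ N - 1 := by
  have hmaps : Set.MapsTo (fun e : Fin N × Fin N ↦ e.1.val + (N - 1 - e.2.val)) E
      (Finset.range (N - 1)) := by
    intro e he
    have := hlt e he
    simp only [Finset.mem_coe, Finset.mem_range]
    omega
  have hinj : Set.InjOn (fun e : Fin N × Fin N ↦ e.1.val + (N - 1 - e.2.val)) E := by
    intro e he f hf hef
    simp only at hef
    rcases lt_trichotomy e.1 f.1 with h | h | h
    · have := hE e he f hf h
      omega
    · ext <;> omega
    · have := hE f hf e he h
      omega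
  simpa using Finset.card_le_card_of_injOn _ hmaps hinj

lemma SimpleGraph.card_edgeFinset_le_card {V : Type*} (G : SimpleGraph V) [Fintype G.edgeSet]
    {E : Finset (V × V)} (h : ∀ i j, G.Adj i j → (i, j) ∈ E ∨ (j, i) ∈ E) :
    G.edgeFinset.card ≤ E.card := by
  calc G.edgeFinset.card ≤ (E.image fun e ↦ s(e.1, e.2)).card := by
        refine Finset.card_le_card ?_
        intro s hs
        induction s using Sym2.ind with
        | _ i j =>
          rcases h i j (G.mem_edgeFinset.1 hs) with hij | hji
          · exact Finset.mem_image_of_mem _ hij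
          · exact Finset.mem_image.2 ⟨_, hji, Sym2.eq_swap⟩
    _ ≤ E.card := Finset.card_image_le

theorem bipartite_convex_minus_hull_edge_no_spanning_tree_general
    (m n : ℕ)
    (p : Fin (m + n) → ℝ × ℝ) (c : ℝ × ℝ) (ρ : ℝ) (hρ : 0 < ρ)
    (θ : Fin (m + n) → ℝ) (hθmono : StrictMono θ)
    (hθrange : ∀ i, θ i ∈ Set.Ico 0 (2 * π))
    (hp : ∀ i, p i = (c.1 + ρ * cos (θ i), c.2 + ρ * sin (θ i)))
    -- `e₀` is a bichromatic edge on the convex hull boundary that is removed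
    (e₀ : Fin (m + n) × Fin (m + n))
    (he₀ : e₀.1.val < m ∧ m ≤ e₀.2.val)
    (he₀hull : segment ℝ (p e₀.1) (p e₀.2) ⊆ frontier (convexHull ℝ (Set.range p)))
    -- `E` is a plane subdrawing of the remaining bichromatic edges
    (E : Finset (Fin (m + n) × Fin (m + n)))
    (hbip : ∀ e ∈ E, e.1.val < m ∧ m ≤ e.2.val)
    (hne₀ : e₀ ∉ E)
    (hcross : ∀ e ∈ E, ∀ f ∈ E, e ≠ f →
      openSegment ℝ (p e.1) (p e.2) ∩ openSegment ℝ (p f.1) (p f.2) = ∅) :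
    E.card ≤ m + n - 2 ∧
    ¬ ∃ T : SimpleGraph (Fin (m + n)), T.IsTree ∧
        ∀ i j, T.Adj i j → (i, j) ∈ E ∨ (j, i) ∈ E := by
  have hccw : IsCCWConvex p := funext hp ▸ isCCWConvex_circle c hρ hθmono hθrange
  have hnest : IsNested E :=
    hccw.isNested (fun e he f hf ↦ (hbip f hf).1.trans_le (hbip e he).2) hcross
  -- a hull edge crosses no chord, so adding it keeps the drawing plane
  have hnest₀ : IsNested (insert e₀ E) :=
    hnest.insert (hccw.consecutive_of_segment_subset_frontier he₀hull) fun e he ↦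
      ⟨he₀.1.trans_le (hbip e he).2, (hbip e he).1.trans_le he₀.2⟩
  have hcard := hnest₀.card_le fun e he ↦ by
    rcases Finset.mem_insert.1 he with rfl | he
    exacts [he₀.1.trans_le he₀.2, (hbip e he).1.trans_le (hbip e he).2]
  rw [Finset.card_insert_of_notMem hne₀] at hcard
  refine ⟨by omega, ?_⟩
  rintro ⟨T, hT, hTE⟩
  have htree := hT.card_edgeFinset
  have hedges := T.card_edgeFinset_le_card hTE
  rw [Fintype.card_fin] at htree
  omega

/-- `m` red (indices `< m`, consecutive in circular order) and `n` blue points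
in convex position on a circle, `m, n ≥ 1`, `m + n ≥ 3`. If one of the two
bichromatic convex hull edges is removed from the straight-line drawing of the
complete bipartite graph, then every plane subdrawing has at most `m + n - 2`
edges; in particular it contains no spanning tree. -/
theorem bipartite_convex_minus_hull_edge_no_spanning_tree
    (m n : ℕ) (hm : 1 ≤ m) (hn : 1 ≤ n) (hmn : 3 ≤ m + n)
    (p : Fin (m + n) → ℝ × ℝ) (c : ℝ × ℝ) (ρ : ℝ) (hρ : 0 < ρ)
    (θ : Fin (m + n) → ℝ) (hθmono : StrictMono θ)
    (hθrange : ∀ i, θ i ∈ Set.Ico 0 (2 * π))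
    (hp : ∀ i, p i = (c.1 + ρ * cos (θ i), c.2 + ρ * sin (θ i)))
    -- `e₀` is a bichromatic edge on the convex hull boundary that is removed
    (e₀ : Fin (m + n) × Fin (m + n))
    (he₀ : e₀.1.val < m ∧ m ≤ e₀.2.val)
    (he₀hull : segment ℝ (p e₀.1) (p e₀.2) ⊆ frontier (convexHull ℝ (Set.range p)))
    -- `E` is a plane subdrawing of the remaining bichromatic edges
    (E : Finset (Fin (m + n) × Fin (m + n)))
    (hbip : ∀ e ∈ E, e.1.val < m ∧ m ≤ e.2.val)
    (hne₀ : e₀ ∉ E)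
    (hcross : ∀ e ∈ E, ∀ f ∈ E, e ≠ f →
      openSegment ℝ (p e.1) (p e.2) ∩ openSegment ℝ (p f.1) (p f.2) = ∅) :
    E.card ≤ m + n - 2 ∧
    ¬ ∃ T : SimpleGraph (Fin (m + n)), T.IsTree ∧
        ∀ i j, T.Adj i j → (i, j) ∈ E ∨ (j, i) ∈ E :=
  bipartite_convex_minus_hull_edge_no_spanning_tree_general m n p c ρ hρ θ hθmono hθrange hp e₀ he₀
    he₀hull E hbip hne₀ hcross
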